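/- Consider an OCO with unbounded memory instance (𝒳, ℋ, A, B) with H_1 = Σ_{k=0}^∞ k‖A^k‖ < ∞. Let f_1, …, f_T : ℋ → ℝ be L-Lipschitz continuous, suppose each f̄_t is convex and L̄-Lipschitz continuous, let R : 𝒳 → ℝ be α-strongly convex, let η > 0, and suppose for each t the decision x_t ∈ 𝒳 minimizes x ↦ Σ_{s=1}^{t-1} f̄_s(x) + R(x)/η over 𝒳 (FTRL iterates). Let h_t be the resulting histories. Then for every t ∈ {1, …, T}, |f_t(h_t) − f̄_t(x_t)| ≤ η L L̄ H_1 / α. -/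

import Mathlib

/-!
The regularized cumulative loss minimized at step `t` is `(α / η)`-strongly convex, and the one
minimized at step `t + 1` differs from it by the `L̄`-Lipschitz loss `f̄_t`. Comparing the quadratic
growth of both objectives around their minimizers gives `‖x_{t+1} - x_t‖ ≤ η L̄ / α`, hence
`‖x_{t-k} - x_t‖ ≤ k η L̄ / α`. Unrolling the recursion,
`h_t - ∑_{k<t} Aᵏ B x_t = ∑_{k<t} Aᵏ B (x_{t-k} - x_t)`, whose norm is at most `H₁ η L̄ / α`;
the `L`-Lipschitz continuity of `f_t` finishes the proof.
-/

open Finset Filter Topology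

section Convexity

variable {E : Type*} [NormedAddCommGroup E] [NormedSpace ℝ E] {s : Set E} {m : ℝ}

theorem ConvexOn.finset_sum {ι : Type*} {t : Finset ι} {f : ι → E → ℝ} (hs : Convex ℝ s)
    (hf : ∀ i ∈ t, ConvexOn ℝ s (f i)) : ConvexOn ℝ s fun x => ∑ i ∈ t, f i x := by
  have := Finset.sum_induction f (ConvexOn ℝ s) (fun _ _ => ConvexOn.add) (convexOn_const 0 hs) hf
  rwa [Finset.sum_fn] at this

theorem ConvexOn.add_strongConvexOn {f g : E → ℝ} (hg : ConvexOn ℝ s g)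
    (hf : StrongConvexOn s m f) : StrongConvexOn s m (g + f) := by
  have := hg.uniformConvexOn_zero.add hf
  rwa [zero_add] at this

theorem StrongConvexOn.div_const {f : E → ℝ} (hf : StrongConvexOn s m f) {c : ℝ} (hc : 0 < c) :
    StrongConvexOn s (m / c) fun x => f x / c := by
  refine ⟨hf.1, fun x hx y hy a b ha hb hab => ?_⟩
  have := div_le_div_of_nonneg_right (hf.2 hx hy ha hb hab) hc.le
  simp only [smul_eq_mul] at this ⊢
  exact this.trans_eq (by ring)

theorem StrongConvexOn.add_sq_norm_sub_le_of_isMinOn {f : E → ℝ} (hf : StrongConvexOn s m f)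
    {x y : E} (hx : x ∈ s) (hmin : IsMinOn f s x) (hy : y ∈ s) :
    f x + m / 2 * ‖y - x‖ ^ 2 ≤ f y := by
  set C := m / 2 * ‖y - x‖ ^ 2 with hC
  have hshrink : ∀ b : ℝ, 0 < b → b ≤ 1 → (1 - b) * C ≤ f y - f x := by
    intro b hb hb1
    have hconv := hf.2 hx hy (sub_nonneg.2 hb1) hb.le (sub_add_cancel 1 b)
    have hmin := isMinOn_iff.1 hmin _ (hf.1 hx hy (sub_nonneg.2 hb1) hb.le (sub_add_cancel 1 b))
    simp only [smul_eq_mul] at hconv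
    rw [norm_sub_rev, ← hC] at hconv
    exact le_of_mul_le_mul_left (by linarith) hb
  have hlim : Tendsto (fun b : ℝ => (1 - b) * C) (𝓝[>] 0) (𝓝 C) := by
    have := ((continuous_const.sub continuous_id).mul continuous_const).tendsto' 0 C
      (by simp : (1 - (0 : ℝ)) * C = C)
    exact this.mono_left nhdsWithin_le_nhds
  have hev : ∀ᶠ b in 𝓝[>] (0 : ℝ), (1 - b) * C ≤ f y - f x := by
    filter_upwards [Ioc_mem_nhdsGT zero_lt_one] with b hb using hshrink b hb.1 hb.2
  linarith [le_of_tendsto hlim hev]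

theorem StrongConvexOn.norm_sub_le_of_isMinOn_add {f g : E → ℝ} {L : ℝ}
    (hf : StrongConvexOn s m f) (hfg : StrongConvexOn s m (f + g)) (hm : 0 < m) (hL : 0 ≤ L)
    (hg : ∀ a ∈ s, ∀ b ∈ s, |g a - g b| ≤ L * ‖a - b‖) {x x' : E}
    (hx : x ∈ s) (hxmin : IsMinOn f s x) (hx' : x' ∈ s) (hx'min : IsMinOn (f + g) s x') :
    ‖x' - x‖ ≤ L / m := by
  have hgrow := hf.add_sq_norm_sub_le_of_isMinOn hx hxmin hx'
  have hgrow' := hfg.add_sq_norm_sub_le_of_isMinOn hx' hx'min hx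
  have hlip := (le_abs_self _).trans (hg x hx x' hx')
  simp only [Pi.add_apply] at hgrow'
  rw [norm_sub_rev] at hgrow' hlip
  have hsq : m * ‖x' - x‖ ^ 2 ≤ L * ‖x' - x‖ := by linarith
  rcases (norm_nonneg (x' - x)).eq_or_lt with hzero | hpos
  · rw [← hzero]
    positivity
  · rw [le_div_iff₀ hm]
    nlinarith

end Convexity

theorem norm_sub_le_of_norm_succ_sub_le {E : Type*} [SeminormedAddCommGroup E] {x : ℕ → E}
    {c : ℝ} {m n : ℕ} (hmn : m ≤ n) (hc : ∀ i, m ≤ i → i < n → ‖x (i + 1) - x i‖ ≤ c) :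
    ‖x n - x m‖ ≤ (n - m : ℕ) * c := by
  rw [← dist_eq_norm, dist_comm]
  have := dist_le_Ico_sum_of_dist_le (f := x) (d := fun _ => c) hmn fun hm hn => by
    rw [dist_comm, dist_eq_norm]
    exact hc _ hm hn
  simpa using this

section FTRL

variable {E : Type*}

noncomputable def ftrlObjective (g : ℕ → E → ℝ) (R : E → ℝ) (η : ℝ) (t : ℕ) (y : E) : ℝ :=
  ∑ r ∈ Icc 1 (t - 1), g r y + R y / η

theorem ftrlObjective_succ (g : ℕ → E → ℝ) (R : E → ℝ) (η : ℝ) {t : ℕ} (ht : 1 ≤ t) :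
    ftrlObjective g R η (t + 1) = ftrlObjective g R η t + g t := by
  obtain ⟨r, rfl⟩ := Nat.exists_eq_add_of_le' ht
  ext y
  simp only [ftrlObjective, Pi.add_apply, Nat.add_sub_cancel,
    sum_Icc_succ_top (Nat.le_add_left 1 r)]
  ring

variable [NormedAddCommGroup E] [NormedSpace ℝ E] {s : Set E}
  {g : ℕ → E → ℝ} {R : E → ℝ} {α η L : ℝ} {T : ℕ}

theorem strongConvexOn_ftrlObjective (hR : StrongConvexOn s α R) (hη : 0 < η)
    (hg : ∀ t, 1 ≤ t → t ≤ T → ConvexOn ℝ s (g t)) {t : ℕ} (htT : t ≤ T) :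
    StrongConvexOn s (α / η) (ftrlObjective g R η t) :=
  (ConvexOn.finset_sum hR.1 fun r hr => hg r (mem_Icc.1 hr).1 (by grind)).add_strongConvexOn
    (hR.div_const hη)

theorem norm_succ_sub_le_of_isMinOn_ftrlObjective (hR : StrongConvexOn s α R) (hα : 0 < α)
    (hη : 0 < η) (hL : 0 ≤ L) (hg : ∀ t, 1 ≤ t → t ≤ T → ConvexOn ℝ s (g t))
    (hglip : ∀ t, 1 ≤ t → t ≤ T → ∀ a ∈ s, ∀ b ∈ s, |g t a - g t b| ≤ L * ‖a - b‖)
    {x : ℕ → E} (hx : ∀ t, 1 ≤ t → t ≤ T → x t ∈ s ∧ IsMinOn (ftrlObjective g R η t) s (x t))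
    {t : ℕ} (ht : 1 ≤ t) (htT : t < T) :
    ‖x (t + 1) - x t‖ ≤ η * L / α := by
  obtain ⟨hxt, hmin⟩ := hx t ht htT.le
  obtain ⟨hxt', hmin'⟩ := hx (t + 1) (by omega) htT
  have hconv' := strongConvexOn_ftrlObjective hR hη hg htT
  rw [ftrlObjective_succ g R η ht] at hconv' hmin'
  have hstab := (strongConvexOn_ftrlObjective hR hη hg htT.le).norm_sub_le_of_isMinOn_add hconv'
    (by positivity) hL (hglip t ht htT.le) hxt hmin hxt' hmin'
  rwa [div_div_eq_mul_div, mul_comm] at hstab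

end FTRL

section History

variable {W H : Type*} [NormedAddCommGroup W] [NormedSpace ℝ W]
  [NormedAddCommGroup H] [NormedSpace ℝ H] {A : H →L[ℝ] H} {B : W →L[ℝ] H}

theorem eq_sum_pow_apply_of_linear_recurrence {h : ℕ → H} {x : ℕ → W} (hh0 : h 0 = 0)
    (hh : ∀ t, h (t + 1) = A (h t) + B (x (t + 1))) (t : ℕ) :
    h t = ∑ k ∈ range t, (A ^ k) (B (x (t - k))) := by
  induction t with
  | zero => simp [hh0]
  | succ t ih =>
    rw [hh t, ih, sum_range_succ', map_sum]
    congr 1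
    refine sum_congr rfl fun k _ => ?_
    rw [Nat.add_sub_add_right, pow_succ']
    rfl

theorem norm_sum_pow_apply_le (hB : ‖B‖ ≤ 1) {y : ℕ → W} {c : ℝ} {t : ℕ}
    (hy : ∀ k < t, ‖y k‖ ≤ k * c) :
    ‖∑ k ∈ range t, (A ^ k) (B (y k))‖ ≤ (∑ k ∈ range t, k * ‖A ^ k‖) * c := by
  rw [sum_mul]
  refine (norm_sum_le _ _).trans (sum_le_sum fun k hk => ?_)
  calc ‖(A ^ k) (B (y k))‖ ≤ ‖A ^ k‖ * ‖B (y k)‖ := (A ^ k).le_opNorm _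
    _ ≤ ‖A ^ k‖ * (k * c) := by
      gcongr
      exact (B.le_of_opNorm_le hB _).trans ((one_mul _).trans_le (hy k (mem_range.1 hk)))
    _ = k * ‖A ^ k‖ * c := by ring

end History

theorem stmt_5_general
    {W : Type*} [NormedAddCommGroup W] [InnerProductSpace ℝ W]
    {H : Type*} [NormedAddCommGroup H] [NormedSpace ℝ H]
    (X : Set W)
    (A : H →L[ℝ] H) (B : W →L[ℝ] H) (hB : ‖B‖ ≤ 1)
    (hH1 : Summable fun k : ℕ => (k : ℝ) * ‖A ^ k‖)
    (T : ℕ) (f : ℕ → H → ℝ) (L Lbar : ℝ) (hL : 0 ≤ L) (hLbar : 0 ≤ Lbar)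
    (hf : ∀ t, 1 ≤ t → t ≤ T → ∀ a b : H, |f t a - f t b| ≤ L * ‖a - b‖)
    (hconv : ∀ t, 1 ≤ t → t ≤ T →
      ConvexOn ℝ X (fun x : W => f t (∑ k ∈ Finset.range t, (A ^ k) (B x))))
    (hlipbar : ∀ t, 1 ≤ t → t ≤ T → ∀ a ∈ X, ∀ b ∈ X,
      |f t (∑ k ∈ Finset.range t, (A ^ k) (B a)) - f t (∑ k ∈ Finset.range t, (A ^ k) (B b))|
        ≤ Lbar * ‖a - b‖)
    (R : W → ℝ) (α : ℝ) (hα : 0 < α) (hR : StrongConvexOn X α R)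
    (η : ℝ) (hη : 0 < η)
    (x : ℕ → W)
    (hx : ∀ t, 1 ≤ t → t ≤ T → x t ∈ X ∧
      ∀ y ∈ X,
        (∑ s ∈ Finset.Icc 1 (t - 1), f s (∑ k ∈ Finset.range s, (A ^ k) (B (x t))))
            + R (x t) / η
          ≤ (∑ s ∈ Finset.Icc 1 (t - 1), f s (∑ k ∈ Finset.range s, (A ^ k) (B y)))
            + R y / η)
    (h : ℕ → H) (hh0 : h 0 = 0) (hh : ∀ t : ℕ, h (t + 1) = A (h t) + B (x (t + 1))) :
    ∀ t, 1 ≤ t → t ≤ T →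
      |f t (h t) - f t (∑ k ∈ Finset.range t, (A ^ k) (B (x t)))|
        ≤ η * L * Lbar * (∑' k : ℕ, (k : ℝ) * ‖A ^ k‖) / α := by
  intro t ht htT
  have hstep : ∀ s, 1 ≤ s → s < T → ‖x (s + 1) - x s‖ ≤ η * Lbar / α := fun s hs hsT =>
    norm_succ_sub_le_of_isMinOn_ftrlObjective hR hα hη hLbar hconv hlipbar
      (fun r hr hrT => ⟨(hx r hr hrT).1, isMinOn_iff.2 (hx r hr hrT).2⟩) hs hsT
  have hdrift : ∀ k < t, ‖x (t - k) - x t‖ ≤ k * (η * Lbar / α) := by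
    intro k hk
    have := norm_sub_le_of_norm_succ_sub_le (Nat.sub_le t k) fun i hi hit =>
      hstep i (by omega) (by omega)
    rwa [norm_sub_rev, Nat.sub_sub_self hk.le] at this
  calc |f t (h t) - f t (∑ k ∈ range t, (A ^ k) (B (x t)))|
      ≤ L * ‖h t - ∑ k ∈ range t, (A ^ k) (B (x t))‖ := hf t ht htT _ _
    _ ≤ L * ((∑ k ∈ range t, k * ‖A ^ k‖) * (η * Lbar / α)) := by
      rw [eq_sum_pow_apply_of_linear_recurrence hh0 hh t, ← sum_sub_distrib]
      simp only [← map_sub]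
      gcongr
      exact norm_sum_pow_apply_le hB hdrift
    _ ≤ L * ((∑' k : ℕ, (k : ℝ) * ‖A ^ k‖) * (η * Lbar / α)) := by
      gcongr
      exact hH1.sum_le_tsum _ fun k _ => by positivity
    _ = η * L * Lbar * (∑' k : ℕ, (k : ℝ) * ‖A ^ k‖) / α := by
      ring

/-- For an OCO with unbounded memory instance with `H₁ = ∑ₖ k‖Aᵏ‖ < ∞`,
`L`-Lipschitz losses `f_t` whose unary forms `f̄_t` are convex and `L̄`-Lipschitz on `𝒳`, and FTRL
iterates `x_t` with step size `η > 0` and `α`-strongly convex regularizer `R`, the actual and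
idealized losses satisfy `|f_t(h_t) − f̄_t(x_t)| ≤ η L L̄ H₁ / α` for every `t ∈ {1, …, T}`. -/
theorem stmt_5
    {W : Type*} [NormedAddCommGroup W] [InnerProductSpace ℝ W] [CompleteSpace W]
    {H : Type*} [NormedAddCommGroup H] [NormedSpace ℝ H] [CompleteSpace H]
    (X : Set W) (hXne : X.Nonempty) (hXclosed : IsClosed X) (hXconvex : Convex ℝ X)
    (A : H →L[ℝ] H) (B : W →L[ℝ] H) (hB : ‖B‖ ≤ 1)
    (hH1 : Summable fun k : ℕ => (k : ℝ) * ‖A ^ k‖)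
    (T : ℕ) (f : ℕ → H → ℝ) (L Lbar : ℝ) (hL : 0 ≤ L) (hLbar : 0 ≤ Lbar)
    (hf : ∀ t, 1 ≤ t → t ≤ T → ∀ a b : H, |f t a - f t b| ≤ L * ‖a - b‖)
    (hconv : ∀ t, 1 ≤ t → t ≤ T →
      ConvexOn ℝ X (fun x : W => f t (∑ k ∈ Finset.range t, (A ^ k) (B x))))
    (hlipbar : ∀ t, 1 ≤ t → t ≤ T → ∀ a ∈ X, ∀ b ∈ X,
      |f t (∑ k ∈ Finset.range t, (A ^ k) (B a)) - f t (∑ k ∈ Finset.range t, (A ^ k) (B b))|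
        ≤ Lbar * ‖a - b‖)
    (R : W → ℝ) (α : ℝ) (hα : 0 < α) (hR : StrongConvexOn X α R)
    (η : ℝ) (hη : 0 < η)
    (x : ℕ → W)
    (hx : ∀ t, 1 ≤ t → t ≤ T → x t ∈ X ∧
      ∀ y ∈ X,
        (∑ s ∈ Finset.Icc 1 (t - 1), f s (∑ k ∈ Finset.range s, (A ^ k) (B (x t))))
            + R (x t) / η
          ≤ (∑ s ∈ Finset.Icc 1 (t - 1), f s (∑ k ∈ Finset.range s, (A ^ k) (B y)))
            + R y / η)
    (h : ℕ → H) (hh0 : h 0 = 0) (hh : ∀ t : ℕ, h (t + 1) = A (h t) + B (x (t + 1))) :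
    ∀ t, 1 ≤ t → t ≤ T →
      |f t (h t) - f t (∑ k ∈ Finset.range t, (A ^ k) (B (x t)))|
        ≤ η * L * Lbar * (∑' k : ℕ, (k : ℝ) * ‖A ^ k‖) / α :=
  stmt_5_general X A B hB hH1 T f L Lbar hL hLbar hf hconv hlipbar R α hα hR η hη x hx h hh0 hh
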